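/- arXiv:1712.07865 — 2 statements merged into one kernel-verified Lean document; each statement's English description precedes it below -/
import Mathlib

section
/- Let F be a Finsler metric, β = b_i y^i a 1-form with β − F ≠ 0, F ≠ 0, and F̄ = β²/(β − F) + β (infinite-series–Randers change). Then (β−F)⁴ ḡ_{ij} = (β³(2β − F)(β − F)/F) g_{ij} + (2β⁴ − 8β³F + 3β²F²)(b_i F_{y^j} + b_j F_{y^i}) + (−2β⁵/F + 8β⁴ − 3β³F) F_{y^i} F_{y^j} + (4β⁴ − 16β³F + 24β²F² − 10βF³ + F⁴) b_i b_j, where ḡ_{ij} = F̄ F̄_{y^i y^j} + F̄_{y^i} F̄_{y^j} and g_{ij} = F F_{y^i y^j} + F_{y^i} F_{y^j}. -/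
open scoped BigOperators

/-- Partial derivative in the fiber variable `y^i`. -/
noncomputable def d1 {n : ℕ} (f : (Fin n → ℝ) → ℝ) (i : Fin n) (y : Fin n → ℝ) : ℝ :=
  fderiv ℝ f y (Pi.single i 1)

/-- Second partial derivative in the fiber variables `y^i`, `y^j`. -/
noncomputable def d2 {n : ℕ} (f : (Fin n → ℝ) → ℝ) (i j : Fin n) (y : Fin n → ℝ) : ℝ :=
  d1 (d1 f i) j y

/-- The 1-form `β(y) = b_i y^i`. -/
noncomputable def lform {n : ℕ} (b : Fin n → ℝ) (y : Fin n → ℝ) : ℝ := ∑ i, b i * y i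

section comb
variable {n : ℕ} {f g : (Fin n → ℝ) → ℝ} {i : Fin n} {y : Fin n → ℝ} {c : ℝ}

lemma d1_add (hf : DifferentiableAt ℝ f y) (hg : DifferentiableAt ℝ g y) :
    d1 (fun z => f z + g z) i y = d1 f i y + d1 g i y := by
  simp only [d1, fderiv_fun_add hf hg, ContinuousLinearMap.add_apply]

lemma d1_sub (hf : DifferentiableAt ℝ f y) (hg : DifferentiableAt ℝ g y) :
    d1 (fun z => f z - g z) i y = d1 f i y - d1 g i y := by
  simp only [d1, fderiv_fun_sub hf hg, ContinuousLinearMap.sub_apply]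

lemma d1_mul (hf : DifferentiableAt ℝ f y) (hg : DifferentiableAt ℝ g y) :
    d1 (fun z => f z * g z) i y = d1 f i y * g y + f y * d1 g i y := by
  simp only [d1, fderiv_fun_mul hf hg, ContinuousLinearMap.add_apply,
    ContinuousLinearMap.smul_apply, smul_eq_mul]
  ring

lemma d1_const : d1 (fun _ => c) i y = 0 := by simp [d1]

lemma d1_pow2 (hf : DifferentiableAt ℝ f y) :
    d1 (fun z => f z ^ 2) i y = 2 * f y * d1 f i y := by
  have h : (fun z => f z ^ 2) = fun z => f z * f z := by funext z; ring
  rw [h, d1_mul hf hf]; ring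

lemma d1_inv (hg : DifferentiableAt ℝ g y) (h0 : g y ≠ 0) :
    d1 (fun z => (g z)⁻¹) i y = -d1 g i y / g y ^ 2 := by
  have h : (fun z => (g z)⁻¹) = Inv.inv ∘ g := rfl
  rw [d1, h, fderiv_comp y (differentiableAt_inv h0) hg]
  rw [fderiv_inv' h0]
  simp only [ContinuousLinearMap.comp_apply, ContinuousLinearMap.neg_apply,
    ContinuousLinearMap.mulLeftRight_apply, d1]
  rw [pow_two, div_eq_mul_inv, mul_inv]
  ring

lemma d1_div (hf : DifferentiableAt ℝ f y) (hg : DifferentiableAt ℝ g y) (h0 : g y ≠ 0) :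
    d1 (fun z => f z / g z) i y = (d1 f i y * g y - f y * d1 g i y) / g y ^ 2 := by
  have h : (fun z => f z / g z) = fun z => f z * (g z)⁻¹ := by
    funext z; rw [div_eq_mul_inv]
  rw [h, d1_mul (g := fun z => (g z)⁻¹) hf (hg.inv h0), d1_inv hg h0]
  field_simp
  ring

lemma lform_diff (b : Fin n → ℝ) : Differentiable ℝ (lform b) := by
  have h : lform b = fun y : Fin n → ℝ => ∑ k, b k * y k := rfl
  rw [h]
  exact Differentiable.fun_sum fun k _ =>
    ((ContinuousLinearMap.proj k : (Fin n → ℝ) →L[ℝ] ℝ).differentiable).const_mul (b k)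

lemma d1_lform (b : Fin n → ℝ) : d1 (lform b) i y = b i := by
  have h : lform b = fun y : Fin n → ℝ => ∑ k, b k * y k := rfl
  have hproj : ∀ k : Fin n, DifferentiableAt ℝ (fun y : Fin n → ℝ => y k) y := fun k =>
    (ContinuousLinearMap.proj k : (Fin n → ℝ) →L[ℝ] ℝ).differentiableAt
  have hdk : ∀ k : Fin n, DifferentiableAt ℝ (fun y : Fin n → ℝ => b k * y k) y := fun k =>
    (hproj k).const_mul (b k)
  rw [d1, h, fderiv_fun_sum (fun k _ => hdk k)]
  have hfk : ∀ k : Fin n, fderiv ℝ (fun y : Fin n → ℝ => y k) y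
      = (ContinuousLinearMap.proj k : (Fin n → ℝ) →L[ℝ] ℝ) := fun k =>
    (ContinuousLinearMap.proj k : (Fin n → ℝ) →L[ℝ] ℝ).fderiv
  have hk : ∀ k : Fin n, fderiv ℝ (fun y : Fin n → ℝ => b k * y k) y
      = b k • (ContinuousLinearMap.proj k : (Fin n → ℝ) →L[ℝ] ℝ) := by
    intro k
    rw [fderiv_const_mul (hproj k), hfk k]
  simp only [ContinuousLinearMap.sum_apply, hk, ContinuousLinearMap.smul_apply,
    ContinuousLinearMap.proj_apply, smul_eq_mul, Pi.single_apply]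
  simp [mul_ite, Finset.sum_ite_eq']

end comb

lemma d1_bar {n : ℕ} (F : (Fin n → ℝ) → ℝ) (b : Fin n → ℝ) (hF : ContDiff ℝ (⊤ : ℕ∞) F)
    (i : Fin n) (y : Fin n → ℝ) (hy : lform b y - F y ≠ 0) :
    d1 (fun y => (lform b y) ^ 2 / (lform b y - F y) + lform b y) i y =
      (2 * lform b y * b i * (lform b y - F y) - (lform b y) ^ 2 * (b i - d1 F i y))
        / (lform b y - F y) ^ 2 + b i := by
  have hβ : DifferentiableAt ℝ (lform b) y := lform_diff b y
  have hFd : DifferentiableAt ℝ F y := (hF.differentiable (by simp)) y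
  have hs : DifferentiableAt ℝ (fun y => lform b y - F y) y := hβ.sub hFd
  have hsq : DifferentiableAt ℝ (fun y => (lform b y) ^ 2) y := hβ.pow 2
  have hdiv : DifferentiableAt ℝ (fun y => (lform b y) ^ 2 / (lform b y - F y)) y := by
    have h : (fun y : Fin n → ℝ => (lform b y) ^ 2 / (lform b y - F y))
        = fun y => (lform b y) ^ 2 * ((lform b y - F y))⁻¹ := by
      funext z; rw [div_eq_mul_inv]
    rw [h]; exact hsq.mul (hs.inv hy)
  simp only [d1_add hdiv hβ, d1_div hsq hs hy, d1_pow2 hβ, d1_sub hβ hFd, d1_lform]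

/-- Fundamental tensor of the infinite-series–Randers change `F̄ = β²/(β−F) + β`. -/
theorem infiniteSeriesRanders_fundamental_tensor {n : ℕ} (F : (Fin n → ℝ) → ℝ)
    (b : Fin n → ℝ) (hF : ContDiff ℝ (⊤ : ℕ∞) F) (hFpos : ∀ y, 0 < F y) (y0 : Fin n → ℝ)
    (hFne : F y0 ≠ 0) (hβF : lform b y0 - F y0 ≠ 0) :
    ∀ i j : Fin n,
      (lform b y0 - F y0) ^ 4 *
        ((fun y => (lform b y) ^ 2 / (lform b y - F y) + lform b y) y0 *
            d2 (fun y => (lform b y) ^ 2 / (lform b y - F y) + lform b y) i j y0 +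
          d1 (fun y => (lform b y) ^ 2 / (lform b y - F y) + lform b y) i y0 *
            d1 (fun y => (lform b y) ^ 2 / (lform b y - F y) + lform b y) j y0) =
      ((lform b y0) ^ 3 * (2 * lform b y0 - F y0) * (lform b y0 - F y0) / F y0) *
          (F y0 * d2 F i j y0 + d1 F i y0 * d1 F j y0)
        + (2 * (lform b y0) ^ 4 - 8 * (lform b y0) ^ 3 * F y0
            + 3 * (lform b y0) ^ 2 * (F y0) ^ 2) *
          (b i * d1 F j y0 + b j * d1 F i y0)
        + (-(2 * (lform b y0) ^ 5 / F y0) + 8 * (lform b y0) ^ 4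
            - 3 * (lform b y0) ^ 3 * F y0) *
          (d1 F i y0 * d1 F j y0)
        + (4 * (lform b y0) ^ 4 - 16 * (lform b y0) ^ 3 * F y0
            + 24 * (lform b y0) ^ 2 * (F y0) ^ 2 - 10 * lform b y0 * (F y0) ^ 3
            + (F y0) ^ 4) *
          (b i * b j) := by
  intro i j
  have hβd : Differentiable ℝ (lform b) := lform_diff b
  have hFd : Differentiable ℝ F := hF.differentiable (by simp)
  have hFk : ∀ k : Fin n, Differentiable ℝ (d1 F k) := by
    intro k
    have h1 : ContDiff ℝ (⊤ : ℕ∞) (fun y => fderiv ℝ F y (Pi.single k 1)) :=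
      (hF.fderiv_right (by simp)).clm_apply contDiff_const
    exact h1.differentiable (by simp)
  have hU : ∀ᶠ y in nhds y0, lform b y - F y ≠ 0 :=
    ((hβd.sub hFd).continuous.continuousAt).eventually_ne hβF
  have hev : (fun y => d1 (fun y => (lform b y) ^ 2 / (lform b y - F y) + lform b y) i y)
      =ᶠ[nhds y0] fun y =>
        (2 * lform b y * b i * (lform b y - F y) - (lform b y) ^ 2 * (b i - d1 F i y))
          / (lform b y - F y) ^ 2 + b i :=
    hU.mono fun y hy => d1_bar F b hF i y hy
  have h2 : d2 (fun y => (lform b y) ^ 2 / (lform b y - F y) + lform b y) i j y0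
      = d1 (fun y =>
          (2 * lform b y * b i * (lform b y - F y) - (lform b y) ^ 2 * (b i - d1 F i y))
            / (lform b y - F y) ^ 2 + b i) j y0 := by
    have h := Filter.EventuallyEq.fderiv_eq (𝕜 := ℝ) hev
    exact congrArg (fun L : (Fin n → ℝ) →L[ℝ] ℝ => L (Pi.single j 1)) h
  -- differentiability at y0
  have hβ0 : DifferentiableAt ℝ (lform b) y0 := hβd y0
  have hF0 : DifferentiableAt ℝ F y0 := hFd y0
  have hFi0 : DifferentiableAt ℝ (d1 F i) y0 := hFk i y0
  have hs0 : DifferentiableAt ℝ (fun y => lform b y - F y) y0 := hβ0.sub hF0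
  have ht1 : DifferentiableAt ℝ (fun y => 2 * lform b y) y0 := hβ0.const_mul 2
  have ht2 : DifferentiableAt ℝ (fun y => 2 * lform b y * b i) y0 := ht1.mul_const (b i)
  have ht3 : DifferentiableAt ℝ (fun y => 2 * lform b y * b i * (lform b y - F y)) y0 :=
    ht2.mul hs0
  have ht4 : DifferentiableAt ℝ (fun y => b i - d1 F i y) y0 :=
    (differentiableAt_const (b i)).sub hFi0
  have hsq0 : DifferentiableAt ℝ (fun y => (lform b y) ^ 2) y0 := hβ0.pow 2
  have ht5 : DifferentiableAt ℝ (fun y => (lform b y) ^ 2 * (b i - d1 F i y)) y0 :=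
    hsq0.mul ht4
  have hN : DifferentiableAt ℝ (fun y =>
      2 * lform b y * b i * (lform b y - F y) - (lform b y) ^ 2 * (b i - d1 F i y)) y0 :=
    ht3.sub ht5
  have hD : DifferentiableAt ℝ (fun y => (lform b y - F y) ^ 2) y0 := hs0.pow 2
  have hD0 : (lform b y0 - F y0) ^ 2 ≠ 0 := pow_ne_zero 2 hβF
  have hQ : DifferentiableAt ℝ (fun y =>
      (2 * lform b y * b i * (lform b y - F y) - (lform b y) ^ 2 * (b i - d1 F i y))
        / (lform b y - F y) ^ 2) y0 := by
    have h : (fun y : Fin n → ℝ =>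
        (2 * lform b y * b i * (lform b y - F y) - (lform b y) ^ 2 * (b i - d1 F i y))
          / (lform b y - F y) ^ 2)
        = fun y => (2 * lform b y * b i * (lform b y - F y)
            - (lform b y) ^ 2 * (b i - d1 F i y)) * (((lform b y - F y) ^ 2))⁻¹ := by
      funext z; rw [div_eq_mul_inv]
    rw [h]; exact hN.mul (hD.inv hD0)
  rw [h2, d1_bar F b hF i y0 hβF, d1_bar F b hF j y0 hβF]
  simp only [d2]
  simp only [d1_add hQ (differentiableAt_const (b i)), d1_div hN hD hD0,
    d1_sub ht3 ht5, d1_mul ht2 hs0, d1_mul ht1 (differentiableAt_const (b i)),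
    d1_mul (differentiableAt_const (2 : ℝ)) hβ0, d1_mul hsq0 ht4,
    d1_pow2 hβ0, d1_pow2 hs0, d1_sub hβ0 hF0,
    d1_sub (differentiableAt_const (b i)) hFi0, d1_lform, d1_const]
  field_simp
  ring
end

section
/- With A = a_{ij}(x)y^i y^j, β = b_i(x)y^i smooth, A > 0, β ≠ 0, let F̄ = A/β + β and L = F̄². If the three equations (i) 3β_ℓβ₀ − ββ_{0ℓ} + 2ββ_{x^ℓ} = 0, (ii) β²(A_{0ℓ} − 2A_{x^ℓ}) − 2β(β_ℓA₀ − A_ℓβ₀) = 0, and (iii) β⁵(β_{0ℓ} − 2β_{x^ℓ}) + β⁴(A_{0ℓ} + β_ℓβ₀ − 2A_{x^ℓ}) + β²A₀A_ℓ = 0 hold for all ℓ, then L_{x^k y^ℓ}y^k − 2L_{x^ℓ} = 0, i.e. F̄ is locally dually flat. -/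
open scoped BigOperators

/-- Partial derivative in the base variable `x^k`. -/
noncomputable def pdx {n : ℕ} (f : (Fin n → ℝ) → (Fin n → ℝ) → ℝ) (k : Fin n)
    (x y : Fin n → ℝ) : ℝ := fderiv ℝ (fun x' => f x' y) x (Pi.single k 1)

/-- Partial derivative in the fiber variable `y^l`. -/
noncomputable def pdy {n : ℕ} (f : (Fin n → ℝ) → (Fin n → ℝ) → ℝ) (l : Fin n)
    (x y : Fin n → ℝ) : ℝ := fderiv ℝ (fun y' => f x y') y (Pi.single l 1)

/-- `f_0 = f_{x^k} y^k` (sum over `k`). -/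
noncomputable def der0 {n : ℕ} (f : (Fin n → ℝ) → (Fin n → ℝ) → ℝ)
    (x y : Fin n → ℝ) : ℝ := ∑ k, pdx f k x y * y k

/-- `f_{0l} = f_{x^k y^l} y^k` (sum over `k`). -/
noncomputable def der0l {n : ℕ} (f : (Fin n → ℝ) → (Fin n → ℝ) → ℝ) (l : Fin n)
    (x y : Fin n → ℝ) : ℝ := ∑ k, pdy (pdx f k) l x y * y k

/-- The Riemannian quadratic form `A(x,y) = a_{ij}(x) y^i y^j`. -/
noncomputable def quadA {n : ℕ} (a : (Fin n → ℝ) → Fin n → Fin n → ℝ)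
    (x y : Fin n → ℝ) : ℝ := ∑ i, ∑ j, a x i j * y i * y j

/-- The 1-form `β(x,y) = b_i(x) y^i`. -/
noncomputable def oneform {n : ℕ} (b : (Fin n → ℝ) → Fin n → ℝ)
    (x y : Fin n → ℝ) : ℝ := ∑ i, b x i * y i

section Aux

variable {n : ℕ}

lemma line_hasDerivAt (f : (Fin n → ℝ) → ℝ) (x v : Fin n → ℝ)
    (hf : DifferentiableAt ℝ f x) :
    HasDerivAt (fun t : ℝ => f (x + t • v)) (fderiv ℝ f x v) 0 := by
  have hline : HasDerivAt (fun t : ℝ => x + t • v) v 0 := by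
    simpa using ((hasDerivAt_id (0 : ℝ)).smul_const v).const_add x
  have hf' : HasFDerivAt f (fderiv ℝ f x) (x + (0 : ℝ) • v) := by
    simpa using hf.hasFDerivAt
  exact hf'.comp_hasDerivAt 0 hline

lemma diff_proj (i : Fin n) (y : Fin n → ℝ) :
    DifferentiableAt ℝ (fun y' : Fin n → ℝ => y' i) y :=
  (ContinuousLinearMap.proj (R := ℝ) (φ := fun _ : Fin n => ℝ) i).differentiableAt

lemma diff_lin (c : Fin n → ℝ) (y : Fin n → ℝ) :
    DifferentiableAt ℝ (fun y' : Fin n → ℝ => ∑ i, c i * y' i) y :=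
  DifferentiableAt.fun_sum fun i _ => (diff_proj i y).const_mul (c i)

lemma diff_quad (c : Fin n → Fin n → ℝ) (y : Fin n → ℝ) :
    DifferentiableAt ℝ (fun y' : Fin n → ℝ => ∑ i, ∑ j, c i j * y' i * y' j) y :=
  DifferentiableAt.fun_sum fun i _ => DifferentiableAt.fun_sum fun j _ =>
    ((diff_proj i y).const_mul (c i j)).mul (diff_proj j y)

lemma fderiv_lin (c : Fin n → ℝ) (y : Fin n → ℝ) (l : Fin n) :
    fderiv ℝ (fun y' : Fin n → ℝ => ∑ i, c i * y' i) y (Pi.single l 1) = c l := by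
  have h1 := line_hasDerivAt (fun y' : Fin n → ℝ => ∑ i, c i * y' i) y (Pi.single l 1)
      (diff_lin c y)
  have h2 : HasDerivAt (fun t : ℝ => ∑ i, c i * (y + t • (Pi.single l 1 : Fin n → ℝ)) i)
      (∑ i, c i * (Pi.single l 1 : Fin n → ℝ) i) 0 := by
    apply HasDerivAt.fun_sum
    intro i _
    have hb : HasDerivAt (fun t : ℝ => y i + t * (Pi.single l 1 : Fin n → ℝ) i) ((Pi.single l 1 : Fin n → ℝ) i) 0 := by
      simpa using ((hasDerivAt_id (0 : ℝ)).mul_const ((Pi.single l 1 : Fin n → ℝ) i)).const_add (y i)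
    have := hb.const_mul (c i)
    simpa [Pi.add_apply, Pi.smul_apply, smul_eq_mul] using this
  have h3 := h1.unique h2
  rw [h3]
  simp [Pi.single_apply]

lemma fderiv_quad (c : Fin n → Fin n → ℝ) (y : Fin n → ℝ) (l : Fin n) :
    fderiv ℝ (fun y' : Fin n → ℝ => ∑ i, ∑ j, c i j * y' i * y' j) y (Pi.single l 1)
      = (∑ j, c l j * y j) + ∑ i, c i l * y i := by
  have h1 := line_hasDerivAt (fun y' : Fin n → ℝ => ∑ i, ∑ j, c i j * y' i * y' j) y
      (Pi.single l 1) (diff_quad c y)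
  have h2 : HasDerivAt
      (fun t : ℝ => ∑ i, ∑ j, c i j * (y + t • (Pi.single l 1 : Fin n → ℝ)) i * (y + t • (Pi.single l 1 : Fin n → ℝ)) j)
      (∑ i, ∑ j, (c i j * (Pi.single l 1 : Fin n → ℝ) i * y j + c i j * y i * (Pi.single l 1 : Fin n → ℝ) j)) 0 := by
    apply HasDerivAt.fun_sum
    intro i _
    apply HasDerivAt.fun_sum
    intro j _
    have hi : HasDerivAt (fun t : ℝ => y i + t * (Pi.single l 1 : Fin n → ℝ) i) ((Pi.single l 1 : Fin n → ℝ) i) 0 := by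
      simpa using ((hasDerivAt_id (0 : ℝ)).mul_const ((Pi.single l 1 : Fin n → ℝ) i)).const_add (y i)
    have hj : HasDerivAt (fun t : ℝ => y j + t * (Pi.single l 1 : Fin n → ℝ) j) ((Pi.single l 1 : Fin n → ℝ) j) 0 := by
      simpa using ((hasDerivAt_id (0 : ℝ)).mul_const ((Pi.single l 1 : Fin n → ℝ) j)).const_add (y j)
    have h := (hi.const_mul (c i j)).fun_mul hj
    have h' : HasDerivAt (fun t : ℝ => c i j * (y i + t * (Pi.single l 1 : Fin n → ℝ) i) * (y j + t * (Pi.single l 1 : Fin n → ℝ) j))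
        (c i j * (Pi.single l 1 : Fin n → ℝ) i * y j + c i j * y i * (Pi.single l 1 : Fin n → ℝ) j) 0 := by
      exact h.congr_deriv (by ring)
    simpa [Pi.add_apply, Pi.smul_apply, smul_eq_mul] using h'
  have h3 := h1.unique h2
  rw [h3]
  simp [Pi.single_apply, ite_mul, mul_ite, Finset.sum_add_distrib]

lemma fderiv_apply_mul_const {f : (Fin n → ℝ) → ℝ} {x v : Fin n → ℝ}
    (hf : DifferentiableAt ℝ f x) (c : ℝ) :
    fderiv ℝ (fun x' => f x' * c) x v = fderiv ℝ f x v * c := by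
  rw [fderiv_mul_const hf]
  simp [mul_comm]

lemma pdx_quadA (a : (Fin n → ℝ) → Fin n → Fin n → ℝ)
    (ha : ∀ i j, ContDiff ℝ (⊤ : ℕ∞) (fun x => a x i j)) (k : Fin n) (x y : Fin n → ℝ) :
    pdx (quadA a) k x y
      = ∑ i, ∑ j, fderiv ℝ (fun x' => a x' i j) x (Pi.single k 1) * y i * y j := by
  have hd : ∀ i j : Fin n, DifferentiableAt ℝ (fun x' => a x' i j) x :=
    fun i j => ((ha i j).differentiable (by simp)).differentiableAt
  show fderiv ℝ (fun x' => ∑ i, ∑ j, a x' i j * y i * y j) x (Pi.single k 1) = _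
  rw [fderiv_fun_sum (fun i _ => DifferentiableAt.fun_sum
      (fun j _ => ((hd i j).mul_const (y i)).mul_const (y j)))]
  rw [ContinuousLinearMap.sum_apply]
  refine Finset.sum_congr rfl fun i _ => ?_
  rw [fderiv_fun_sum (fun j _ => ((hd i j).mul_const (y i)).mul_const (y j)),
      ContinuousLinearMap.sum_apply]
  refine Finset.sum_congr rfl fun j _ => ?_
  rw [fderiv_apply_mul_const ((hd i j).mul_const (y i)) (y j),
      fderiv_apply_mul_const (hd i j) (y i)]

lemma pdx_oneform (b : (Fin n → ℝ) → Fin n → ℝ)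
    (hb : ∀ i, ContDiff ℝ (⊤ : ℕ∞) (fun x => b x i)) (k : Fin n) (x y : Fin n → ℝ) :
    pdx (oneform b) k x y
      = ∑ i, fderiv ℝ (fun x' => b x' i) x (Pi.single k 1) * y i := by
  have hd : ∀ i : Fin n, DifferentiableAt ℝ (fun x' => b x' i) x :=
    fun i => ((hb i).differentiable (by simp)).differentiableAt
  show fderiv ℝ (fun x' => ∑ i, b x' i * y i) x (Pi.single k 1) = _
  rw [fderiv_fun_sum (fun i _ => (hd i).mul_const (y i)), ContinuousLinearMap.sum_apply]
  refine Finset.sum_congr rfl fun i _ => ?_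
  rw [fderiv_apply_mul_const (hd i) (y i)]

end Aux

lemma scalar_key (AA BB A0v B0v A0lv B0lv Alv Blv Axlv Bxlv : ℝ) (hB : BB ≠ 0) :
    BB ^ 4 * (((2 * (((Alv * BB - AA * Blv) / BB ^ 2 + Blv) * (BB / BB ^ 2) + (AA / BB + BB) * ((Blv * BB ^ 2 - 2 * BB ^ 2 * Blv) / BB ^ 4))) * A0v + (2 * (((Alv * BB - AA * Blv) / BB ^ 2 + Blv) * (1 - AA / BB ^ 2) + (AA / BB + BB) * ((-Alv * BB ^ 2 + 2 * AA * BB * Blv) / BB ^ 4))) * B0v + (2 * ((AA / BB + BB) * (BB ^ 3 / BB ^ 4))) * A0lv + (2 * ((AA / BB + BB) * (1 - AA * BB ^ 2 / BB ^ 4))) * B0lv) - 2 * (2 * ((AA / BB + BB) * ((Axlv * BB - AA * Bxlv) / (BB) ^ 2 + Bxlv)))) = 2 * AA ^ 2 * (3 * Blv * B0v - BB * B0lv + 2 * BB * Bxlv) + 2 * AA * ((BB) ^ 2 * (A0lv - 2 * Axlv) - 2 * BB * (Blv * A0v - Alv * B0v)) + 2 * ((BB) ^ 5 * (B0lv - 2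 * Bxlv) + (BB) ^ 4 * (A0lv + Blv * B0v - 2 * Axlv) + (BB) ^ 2 * (A0v * Alv)) - 8 * AA * BB * Alv * B0v := by
  field_simp
  ring


/-- Local dual flatness of the Kropina–Randers change `F̄ = A/β + β`:
the three conditions imply `L_{x^k y^l} y^k − 2 L_{x^l} = 0` for `L = F̄²`. -/
theorem kropinaRanders_locally_dually_flat {n : ℕ}
    (a : (Fin n → ℝ) → Fin n → Fin n → ℝ) (b : (Fin n → ℝ) → Fin n → ℝ)
    (ha : ∀ i j, ContDiff ℝ (⊤ : ℕ∞) (fun x => a x i j)) (hsym : ∀ x i j, a x i j = a x j i)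
    (hb : ∀ i, ContDiff ℝ (⊤ : ℕ∞) (fun x => b x i))
    (x0 y0 : Fin n → ℝ) (hA : 0 < quadA a x0 y0) (hβ : oneform b x0 y0 ≠ 0)
    (h1 : ∀ l : Fin n,
      3 * b x0 l * der0 (oneform b) x0 y0
        - oneform b x0 y0 * der0l (oneform b) l x0 y0
        + 2 * oneform b x0 y0 * pdx (oneform b) l x0 y0 = 0)
    (h2 : ∀ l : Fin n,
      (oneform b x0 y0) ^ 2 * (der0l (quadA a) l x0 y0 - 2 * pdx (quadA a) l x0 y0)
        - 2 * oneform b x0 y0 *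
            (b x0 l * der0 (quadA a) x0 y0
              - pdy (quadA a) l x0 y0 * der0 (oneform b) x0 y0) = 0)
    (h3 : ∀ l : Fin n,
      (oneform b x0 y0) ^ 5 * (der0l (oneform b) l x0 y0 - 2 * pdx (oneform b) l x0 y0)
        + (oneform b x0 y0) ^ 4 *
            (der0l (quadA a) l x0 y0 + b x0 l * der0 (oneform b) x0 y0
              - 2 * pdx (quadA a) l x0 y0)
        + (oneform b x0 y0) ^ 2 *
            (der0 (quadA a) x0 y0 * pdy (quadA a) l x0 y0) = 0) :
    ∀ l : Fin n,
      der0l (fun x y =>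
          (quadA a x y / oneform b x y + oneform b x y) ^ 2) l x0 y0
        - 2 * pdx (fun x y =>
            (quadA a x y / oneform b x y + oneform b x y) ^ 2) l x0 y0 = 0 := by
  intro l
  have hd_a : ∀ i j : Fin n, DifferentiableAt ℝ (fun x' => a x' i j) x0 :=
    fun i j => ((ha i j).differentiable (by simp)).differentiableAt
  have hd_b : ∀ i : Fin n, DifferentiableAt ℝ (fun x' => b x' i) x0 :=
    fun i => ((hb i).differentiable (by simp)).differentiableAt
  have hdAx : ∀ y : Fin n → ℝ, DifferentiableAt ℝ (fun x' => quadA a x' y) x0 := by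
    intro y
    show DifferentiableAt ℝ (fun x' => ∑ i, ∑ j, a x' i j * y i * y j) x0
    exact DifferentiableAt.fun_sum fun i _ => DifferentiableAt.fun_sum fun j _ =>
      ((hd_a i j).mul_const (y i)).mul_const (y j)
  have hdBx : ∀ y : Fin n → ℝ, DifferentiableAt ℝ (fun x' => oneform b x' y) x0 := by
    intro y
    show DifferentiableAt ℝ (fun x' => ∑ i, b x' i * y i) x0
    exact DifferentiableAt.fun_sum fun i _ => (hd_b i).mul_const (y i)
  have hPhix : ∀ (k : Fin n) (y : Fin n → ℝ), oneform b x0 y ≠ 0 →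
      pdx (fun x y => (quadA a x y / oneform b x y + oneform b x y) ^ 2) k x0 y = 2 * ((quadA a x0 y / oneform b x0 y + oneform b x0 y) * ((pdx (quadA a) k x0 y * oneform b x0 y - quadA a x0 y * pdx (oneform b) k x0 y) / (oneform b x0 y) ^ 2 + pdx (oneform b) k x0 y)) := by
    intro k y hy
    have hA1 := line_hasDerivAt (fun x' => quadA a x' y) x0 (Pi.single k 1) (hdAx y)
    have hB1 := line_hasDerivAt (fun x' => oneform b x' y) x0 (Pi.single k 1) (hdBx y)
    have hne : oneform b (x0 + (0 : ℝ) • (Pi.single k 1 : Fin n → ℝ)) y ≠ 0 := by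
      simpa using hy
    have hcomb := ((hA1.fun_div hB1 hne).fun_add hB1).fun_pow 2
    have hLd : DifferentiableAt ℝ
        (fun x' => (quadA a x' y / oneform b x' y + oneform b x' y) ^ 2) x0 := by
      simp only [div_eq_mul_inv]
      exact (((hdAx y).mul ((hdBx y).inv hy)).add (hdBx y)).pow 2
    have hline := line_hasDerivAt
        (fun x' => (quadA a x' y / oneform b x' y + oneform b x' y) ^ 2) x0
        (Pi.single k 1) hLd
    have h := hline.unique hcomb
    show fderiv ℝ (fun x' => (quadA a x' y / oneform b x' y + oneform b x' y) ^ 2) x0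
        (Pi.single k 1) = _
    rw [h]
    simp only [zero_smul, add_zero, pdx]
    push_cast
    ring
  have hUopen : IsOpen {y : Fin n → ℝ | oneform b x0 y ≠ 0} := by
    have hc : Continuous (fun y : Fin n → ℝ => oneform b x0 y) := by
      show Continuous (fun y : Fin n → ℝ => ∑ i, b x0 i * y i)
      exact continuous_finset_sum _ fun i _ => continuous_const.mul (continuous_apply i)
    exact isOpen_ne.preimage hc
  have hdqA : DifferentiableAt ℝ (fun y' => quadA a x0 y') y0 := diff_quad (a x0) y0
  have hdqB : DifferentiableAt ℝ (fun y' => oneform b x0 y') y0 := diff_lin (b x0) y0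
  have hfunPA : ∀ k : Fin n, (fun y' => pdx (quadA a) k x0 y')
      = (fun y' : Fin n → ℝ => ∑ i, ∑ j,
          fderiv ℝ (fun x' => a x' i j) x0 (Pi.single k 1) * y' i * y' j) :=
    fun k => funext fun y' => pdx_quadA a ha k x0 y'
  have hfunPB : ∀ k : Fin n, (fun y' => pdx (oneform b) k x0 y')
      = (fun y' : Fin n → ℝ => ∑ i,
          fderiv ℝ (fun x' => b x' i) x0 (Pi.single k 1) * y' i) :=
    fun k => funext fun y' => pdx_oneform b hb k x0 y'
  have hA' : HasDerivAt (fun t : ℝ => quadA a x0 (y0 + t • (Pi.single l 1 : Fin n → ℝ)))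
      (pdy (quadA a) l x0 y0) 0 :=
    line_hasDerivAt (fun y' => quadA a x0 y') y0 (Pi.single l 1) hdqA
  have hB' : HasDerivAt (fun t : ℝ => oneform b x0 (y0 + t • (Pi.single l 1 : Fin n → ℝ)))
      (b x0 l) 0 := by
    have h := line_hasDerivAt (fun y' : Fin n → ℝ => ∑ i, b x0 i * y' i) y0 (Pi.single l 1)
        (diff_lin (b x0) y0)
    rw [fderiv_lin] at h
    exact h
  have hdPA : ∀ k : Fin n, DifferentiableAt ℝ (fun y' => pdx (quadA a) k x0 y') y0 := by
    intro k; rw [hfunPA k]; exact diff_quad _ y0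
  have hdPB : ∀ k : Fin n, DifferentiableAt ℝ (fun y' => pdx (oneform b) k x0 y') y0 := by
    intro k; rw [hfunPB k]; exact diff_lin _ y0
  have hPA' : ∀ k : Fin n, HasDerivAt
      (fun t : ℝ => pdx (quadA a) k x0 (y0 + t • (Pi.single l 1 : Fin n → ℝ)))
      (pdy (pdx (quadA a) k) l x0 y0) 0 :=
    fun k => line_hasDerivAt (fun y' => pdx (quadA a) k x0 y') y0 (Pi.single l 1) (hdPA k)
  have hPB' : ∀ k : Fin n, HasDerivAt
      (fun t : ℝ => pdx (oneform b) k x0 (y0 + t • (Pi.single l 1 : Fin n → ℝ)))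
      (pdy (pdx (oneform b) k) l x0 y0) 0 :=
    fun k => line_hasDerivAt (fun y' => pdx (oneform b) k x0 y') y0 (Pi.single l 1) (hdPB k)
  have hne0 : oneform b x0 (y0 + (0 : ℝ) • (Pi.single l 1 : Fin n → ℝ)) ≠ 0 := by
    simpa using hβ
  have hDk : ∀ k : Fin n,
      pdy (pdx (fun x y => (quadA a x y / oneform b x y + oneform b x y) ^ 2) k) l x0 y0
        = (2 * (((pdy (quadA a) l x0 y0 * oneform b x0 y0 - quadA a x0 y0 * b x0 l) / oneform b x0 y0 ^ 2 + b x0 l) * (oneform b x0 y0 / oneform b x0 y0 ^ 2) + (quadA a x0 y0 / oneform b x0 y0 + oneform b x0 y0) * ((b x0 l * oneform b x0 y0 ^ 2 - 2 * oneform b x0 y0 ^ 2 * b x0 l) / oneform b x0 y0 ^ 4))) * pdx (quadA a) k x0 y0 + (2 * (((pdy (quadA a) l x0 y0 * oneform b x0 y0 - quadA a x0 y0 * b x0 l) / oneform b x0 y0 ^ 2 + b x0 l) * (1 - quadA a x0 y0 / oneform b x0 y0 ^ 2) + (quadA a x0 y0 / oneform b x0 y0 + oneform b x0 y0) * ((-pdy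 (quadA a) l x0 y0 * oneform b x0 y0 ^ 2 + 2 * quadA a x0 y0 * oneform b x0 y0 * b x0 l) / oneform b x0 y0 ^ 4))) * pdx (oneform b) k x0 y0
          + (2 * ((quadA a x0 y0 / oneform b x0 y0 + oneform b x0 y0) * (oneform b x0 y0 ^ 3 / oneform b x0 y0 ^ 4))) * pdy (pdx (quadA a) k) l x0 y0
          + (2 * ((quadA a x0 y0 / oneform b x0 y0 + oneform b x0 y0) * (1 - quadA a x0 y0 * oneform b x0 y0 ^ 2 / oneform b x0 y0 ^ 4))) * pdy (pdx (oneform b) k) l x0 y0 := by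
    intro k
    have hev : (fun y' => pdx (fun x y => (quadA a x y / oneform b x y + oneform b x y) ^ 2) k x0 y')
        =ᶠ[nhds y0] (fun y' => 2 * ((quadA a x0 y' / oneform b x0 y' + oneform b x0 y') * ((pdx (quadA a) k x0 y' * oneform b x0 y' - quadA a x0 y' * pdx (oneform b) k x0 y') / (oneform b x0 y') ^ 2 + pdx (oneform b) k x0 y'))) :=
      Filter.eventuallyEq_of_mem (hUopen.mem_nhds hβ) (fun y hy => hPhix k y hy)
    have hfd : pdy (pdx (fun x y => (quadA a x y / oneform b x y + oneform b x y) ^ 2) k) l x0 y0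
        = fderiv ℝ (fun y' => 2 * ((quadA a x0 y' / oneform b x0 y' + oneform b x0 y') * ((pdx (quadA a) k x0 y' * oneform b x0 y' - quadA a x0 y' * pdx (oneform b) k x0 y') / (oneform b x0 y') ^ 2 + pdx (oneform b) k x0 y'))) y0 (Pi.single l 1) := by
      show fderiv ℝ (fun y' => pdx (fun x y => (quadA a x y / oneform b x y + oneform b x y) ^ 2) k x0 y') y0 (Pi.single l 1) = _
      rw [hev.fderiv_eq]
    have hdPhi : DifferentiableAt ℝ (fun y' => 2 * ((quadA a x0 y' / oneform b x0 y' + oneform b x0 y') * ((pdx (quadA a) k x0 y' * oneform b x0 y' - quadA a x0 y' * pdx (oneform b) k x0 y') / (oneform b x0 y') ^ 2 + pdx (oneform b) k x0 y'))) y0 := by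
      simp only [div_eq_mul_inv]
      have hu : DifferentiableAt ℝ (fun y' => quadA a x0 y' * (oneform b x0 y')⁻¹ + oneform b x0 y') y0 :=
        (hdqA.mul (hdqB.inv hβ)).add hdqB
      have hnum : DifferentiableAt ℝ (fun y' => pdx (quadA a) k x0 y' * oneform b x0 y' - quadA a x0 y' * pdx (oneform b) k x0 y') y0 :=
        ((hdPA k).mul hdqB).sub (hdqA.mul (hdPB k))
      have hw : DifferentiableAt ℝ (fun y' => (pdx (quadA a) k x0 y' * oneform b x0 y' - quadA a x0 y' * pdx (oneform b) k x0 y') * ((oneform b x0 y') ^ 2)⁻¹ + pdx (oneform b) k x0 y') y0 :=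
        (hnum.mul ((hdqB.pow 2).inv (pow_ne_zero 2 hβ))).add (hdPB k)
      exact (hu.mul hw).const_mul 2
    have hline := line_hasDerivAt (fun y' => 2 * ((quadA a x0 y' / oneform b x0 y' + oneform b x0 y') * ((pdx (quadA a) k x0 y' * oneform b x0 y' - quadA a x0 y' * pdx (oneform b) k x0 y') / (oneform b x0 y') ^ 2 + pdx (oneform b) k x0 y'))) y0 (Pi.single l 1) hdPhi
    have hcomb := ((((hA'.fun_div hB' hne0).fun_add hB').fun_mul
        (((((hPA' k).fun_mul hB').fun_sub (hA'.fun_mul (hPB' k))).fun_div (hB'.fun_pow 2)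
          (pow_ne_zero 2 hne0)).fun_add (hPB' k)))).const_mul 2
    have h := hline.unique hcomb
    rw [hfd, h]
    simp only [zero_smul, add_zero]
    push_cast
    field_simp
    ring
  have hder : der0l (fun x y => (quadA a x y / oneform b x y + oneform b x y) ^ 2) l x0 y0
      = (2 * (((pdy (quadA a) l x0 y0 * oneform b x0 y0 - quadA a x0 y0 * b x0 l) / oneform b x0 y0 ^ 2 + b x0 l) * (oneform b x0 y0 / oneform b x0 y0 ^ 2) + (quadA a x0 y0 / oneform b x0 y0 + oneform b x0 y0) * ((b x0 l * oneform b x0 y0 ^ 2 - 2 * oneform b x0 y0 ^ 2 * b x0 l) / oneform b x0 y0 ^ 4))) * der0 (quadA a) x0 y0 + (2 * (((pdy (quadA a) l x0 y0 * oneform b x0 y0 - quadA a x0 y0 * b x0 l) / oneform b x0 y0 ^ 2 + b x0 l) * (1 - quadA a x0 y0 / oneform b x0 y0 ^ 2) + (quadA a x0 y0 / oneform b x0 y0 + oneform b x0 y0) * ((-pdy (quadA a) l x0 y0 * oneform b x0 y0 ^ 2 + 2 * quadA a x0 y0 * oneform b x0 y0 * b x0 l) / oneform b x0 y0 ^ 4)))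 * der0 (oneform b) x0 y0
        + (2 * ((quadA a x0 y0 / oneform b x0 y0 + oneform b x0 y0) * (oneform b x0 y0 ^ 3 / oneform b x0 y0 ^ 4))) * der0l (quadA a) l x0 y0 + (2 * ((quadA a x0 y0 / oneform b x0 y0 + oneform b x0 y0) * (1 - quadA a x0 y0 * oneform b x0 y0 ^ 2 / oneform b x0 y0 ^ 4))) * der0l (oneform b) l x0 y0 := by
    show (∑ k, pdy (pdx (fun x y => (quadA a x y / oneform b x y + oneform b x y) ^ 2) k) l x0 y0 * y0 k) = _
    calc (∑ k, pdy (pdx (fun x y => (quadA a x y / oneform b x y + oneform b x y) ^ 2) k) l x0 y0 * y0 k)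
        = ∑ k, ((2 * (((pdy (quadA a) l x0 y0 * oneform b x0 y0 - quadA a x0 y0 * b x0 l) / oneform b x0 y0 ^ 2 + b x0 l) * (oneform b x0 y0 / oneform b x0 y0 ^ 2) + (quadA a x0 y0 / oneform b x0 y0 + oneform b x0 y0) * ((b x0 l * oneform b x0 y0 ^ 2 - 2 * oneform b x0 y0 ^ 2 * b x0 l) / oneform b x0 y0 ^ 4))) * (pdx (quadA a) k x0 y0 * y0 k)
            + (2 * (((pdy (quadA a) l x0 y0 * oneform b x0 y0 - quadA a x0 y0 * b x0 l) / oneform b x0 y0 ^ 2 + b x0 l) * (1 - quadA a x0 y0 / oneform b x0 y0 ^ 2) + (quadA a x0 y0 / oneform b x0 y0 + oneform b x0 y0) * ((-pdy (quadA a) l x0 y0 * oneform b x0 y0 ^ 2 + 2 * quadA a x0 y0 * oneform b x0 y0 * b x0 l) / oneform b x0 y0 ^ 4))) * (pdx (oneform b) k x0 y0 * y0 k)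
            + (2 * ((quadA a x0 y0 / oneform b x0 y0 + oneform b x0 y0) * (oneform b x0 y0 ^ 3 / oneform b x0 y0 ^ 4))) * (pdy (pdx (quadA a) k) l x0 y0 * y0 k)
            + (2 * ((quadA a x0 y0 / oneform b x0 y0 + oneform b x0 y0) * (1 - quadA a x0 y0 * oneform b x0 y0 ^ 2 / oneform b x0 y0 ^ 4))) * (pdy (pdx (oneform b) k) l x0 y0 * y0 k)) :=
          Finset.sum_congr rfl fun k _ => by rw [hDk k]; ring
      _ = (2 * (((pdy (quadA a) l x0 y0 * oneform b x0 y0 - quadA a x0 y0 * b x0 l) / oneform b x0 y0 ^ 2 + b x0 l) * (oneform b x0 y0 / oneform b x0 y0 ^ 2) + (quadA a x0 y0 / oneform b x0 y0 + oneform b x0 y0) * ((b x0 l * oneform b x0 y0 ^ 2 - 2 * oneform b x0 y0 ^ 2 * b x0 l) / oneform b x0 y0 ^ 4))) * (∑ k, pdx (quadA a) k x0 y0 * y0 k)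
            + (2 * (((pdy (quadA a) l x0 y0 * oneform b x0 y0 - quadA a x0 y0 * b x0 l) / oneform b x0 y0 ^ 2 + b x0 l) * (1 - quadA a x0 y0 / oneform b x0 y0 ^ 2) + (quadA a x0 y0 / oneform b x0 y0 + oneform b x0 y0) * ((-pdy (quadA a) l x0 y0 * oneform b x0 y0 ^ 2 + 2 * quadA a x0 y0 * oneform b x0 y0 * b x0 l) / oneform b x0 y0 ^ 4))) * (∑ k, pdx (oneform b) k x0 y0 * y0 k)
            + (2 * ((quadA a x0 y0 / oneform b x0 y0 + oneform b x0 y0) * (oneform b x0 y0 ^ 3 / oneform b x0 y0 ^ 4))) * (∑ k, pdy (pdx (quadA a) k) l x0 y0 * y0 k)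
            + (2 * ((quadA a x0 y0 / oneform b x0 y0 + oneform b x0 y0) * (1 - quadA a x0 y0 * oneform b x0 y0 ^ 2 / oneform b x0 y0 ^ 4))) * (∑ k, pdy (pdx (oneform b) k) l x0 y0 * y0 k) := by
          rw [Finset.sum_add_distrib, Finset.sum_add_distrib, Finset.sum_add_distrib,
            ← Finset.mul_sum, ← Finset.mul_sum, ← Finset.mul_sum, ← Finset.mul_sum]
      _ = _ := rfl
  -- β₀ = 0
  have hpdyPB : ∀ k m : Fin n, pdy (pdx (oneform b) k) m x0 y0
      = fderiv ℝ (fun x' => b x' m) x0 (Pi.single k 1) := by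
    intro k m
    show fderiv ℝ (fun y' => pdx (oneform b) k x0 y') y0 (Pi.single m 1) = _
    rw [hfunPB k]
    exact fderiv_lin _ y0 m
  have hS1 : ∑ m, der0l (oneform b) m x0 y0 * y0 m = der0 (oneform b) x0 y0 := by
    calc ∑ m, der0l (oneform b) m x0 y0 * y0 m
        = ∑ m, ∑ k, (fderiv ℝ (fun x' => b x' m) x0 (Pi.single k 1) * y0 k) * y0 m := by
          refine Finset.sum_congr rfl fun m _ => ?_
          have e1 : der0l (oneform b) m x0 y0
              = ∑ k, fderiv ℝ (fun x' => b x' m) x0 (Pi.single k 1) * y0 k :=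
            Finset.sum_congr rfl fun k _ => by rw [hpdyPB k m]
          rw [e1, Finset.sum_mul]
      _ = ∑ k, ∑ m, (fderiv ℝ (fun x' => b x' m) x0 (Pi.single k 1) * y0 k) * y0 m :=
          Finset.sum_comm
      _ = ∑ k, (∑ m, fderiv ℝ (fun x' => b x' m) x0 (Pi.single k 1) * y0 m) * y0 k := by
          refine Finset.sum_congr rfl fun k _ => ?_
          rw [Finset.sum_mul]
          exact Finset.sum_congr rfl fun m _ => by ring
      _ = ∑ k, pdx (oneform b) k x0 y0 * y0 k := by
          refine Finset.sum_congr rfl fun k _ => ?_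
          rw [pdx_oneform b hb k x0 y0]
      _ = der0 (oneform b) x0 y0 := rfl
  have hsum0 : ∑ m, (3 * b x0 m * der0 (oneform b) x0 y0
      - oneform b x0 y0 * der0l (oneform b) m x0 y0
      + 2 * oneform b x0 y0 * pdx (oneform b) m x0 y0) * y0 m = 0 :=
    Finset.sum_eq_zero fun m _ => by rw [h1 m, zero_mul]
  have hexp : ∑ m, (3 * b x0 m * der0 (oneform b) x0 y0
      - oneform b x0 y0 * der0l (oneform b) m x0 y0
      + 2 * oneform b x0 y0 * pdx (oneform b) m x0 y0) * y0 m
      = 4 * oneform b x0 y0 * der0 (oneform b) x0 y0 := by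
    calc ∑ m, (3 * b x0 m * der0 (oneform b) x0 y0
          - oneform b x0 y0 * der0l (oneform b) m x0 y0
          + 2 * oneform b x0 y0 * pdx (oneform b) m x0 y0) * y0 m
        = ∑ m, (3 * der0 (oneform b) x0 y0 * (b x0 m * y0 m)
            - oneform b x0 y0 * (der0l (oneform b) m x0 y0 * y0 m)
            + 2 * oneform b x0 y0 * (pdx (oneform b) m x0 y0 * y0 m)) :=
          Finset.sum_congr rfl fun m _ => by ring
      _ = (∑ m, (3 * der0 (oneform b) x0 y0 * (b x0 m * y0 m)
            - oneform b x0 y0 * (der0l (oneform b) m x0 y0 * y0 m)))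
            + ∑ m, 2 * oneform b x0 y0 * (pdx (oneform b) m x0 y0 * y0 m) :=
          Finset.sum_add_distrib
      _ = (∑ m, 3 * der0 (oneform b) x0 y0 * (b x0 m * y0 m))
            - (∑ m, oneform b x0 y0 * (der0l (oneform b) m x0 y0 * y0 m))
            + ∑ m, 2 * oneform b x0 y0 * (pdx (oneform b) m x0 y0 * y0 m) := by
          rw [Finset.sum_sub_distrib]
      _ = 3 * der0 (oneform b) x0 y0 * (∑ m, b x0 m * y0 m)
            - oneform b x0 y0 * (∑ m, der0l (oneform b) m x0 y0 * y0 m)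
            + 2 * oneform b x0 y0 * (∑ m, pdx (oneform b) m x0 y0 * y0 m) := by
          rw [← Finset.mul_sum, ← Finset.mul_sum, ← Finset.mul_sum]
      _ = 3 * der0 (oneform b) x0 y0 * oneform b x0 y0
            - oneform b x0 y0 * der0 (oneform b) x0 y0
            + 2 * oneform b x0 y0 * der0 (oneform b) x0 y0 := by
          rw [hS1]
          rfl
      _ = 4 * oneform b x0 y0 * der0 (oneform b) x0 y0 := by ring
  have hB0 : der0 (oneform b) x0 y0 = 0 := by
    have h4 : 4 * oneform b x0 y0 * der0 (oneform b) x0 y0 = 0 := by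
      rw [← hexp]; exact hsum0
    rcases mul_eq_zero.mp h4 with h | h
    · exact absurd h (mul_ne_zero (by norm_num) hβ)
    · exact h
  have hpdxl := hPhix l y0 hβ
  have skey := scalar_key (quadA a x0 y0) (oneform b x0 y0) (der0 (quadA a) x0 y0)
    (der0 (oneform b) x0 y0) (der0l (quadA a) l x0 y0) (der0l (oneform b) l x0 y0)
    (pdy (quadA a) l x0 y0) (b x0 l) (pdx (quadA a) l x0 y0) (pdx (oneform b) l x0 y0) hβ
  have key2 : oneform b x0 y0 ^ 4 *
      (der0l (fun x y => (quadA a x y / oneform b x y + oneform b x y) ^ 2) l x0 y0 - 2 * pdx (fun x y => (quadA a x y / oneform b x y + oneform b x y) ^ 2) l x0 y0) = 0 := by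
    rw [hder, hpdxl, skey, h1 l, h2 l, h3 l, hB0]
    ring
  rcases mul_eq_zero.mp key2 with h | h
  · exact absurd h (pow_ne_zero 4 hβ)
  · exact h
end
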